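/- Let X be a locally finite CAT(0) cube complex and let β, γ be combinatorial geodesic rays with β(0) = γ(0) such that every hyperplane crossing β crosses every hyperplane crossing γ. Then there exists a combinatorial geodesic ray σ with σ(0)=β(0) whose set of crossing hyperplanes equals W(β) ∪ W(γ). -/

import Mathlib

/-- The set of walls separating `u` from `v`. Walls model the hyperplanes of a
CAT(0) cube complex (via its median 1-skeleton) through a halfspace indicator. -/
def sepSet {V W : Type*} (side : W → V → Bool) (u v : V) : Set W :=
  {w | side w u ≠ side w v}

/-- `γ : ℕ → V` is a combinatorial geodesic ray in `Γ`. -/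
def IsGeodesicRay {V : Type*} (Γ : SimpleGraph V) (γ : ℕ → V) : Prop :=
  (∀ t : ℕ, Γ.Adj (γ t) (γ (t + 1))) ∧ ∀ s t : ℕ, s ≤ t → Γ.dist (γ s) (γ t) = t - s

/-- The set of hyperplanes crossed by the ray `γ`. -/
def raysWalls {V W : Type*} (side : W → V → Bool) (γ : ℕ → V) : Set W :=
  {w | ∃ t : ℕ, side w (γ t) ≠ side w (γ (t + 1))}

/-- Two hyperplanes cross: all four quarterspaces are nonempty. -/
def WallsCross {V W : Type*} (side : W → V → Bool) (w₁ w₂ : W) : Prop :=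
  ∀ b₁ b₂ : Bool, ∃ v : V, side w₁ v = b₁ ∧ side w₂ v = b₂

/-- `m` is a median of `x`, `y`, `z`. -/
def IsMedianPt {V : Type*} (Γ : SimpleGraph V) (x y z m : V) : Prop :=
  Γ.dist x m + Γ.dist m y = Γ.dist x y ∧
    Γ.dist x m + Γ.dist m z = Γ.dist x z ∧
    Γ.dist y m + Γ.dist m z = Γ.dist y z

/-- A median graph: any three vertices have a unique median. -/
def IsMedianGraph {V : Type*} (Γ : SimpleGraph V) : Prop :=
  ∀ x y z : V, ∃! m : V, IsMedianPt Γ x y z m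

/-!
Write `A n` and `B k` for the sets of walls separating `o = β 0` from `β n` and from `γ k`.
By induction there is a vertex `J n k` with walls `A n ∪ B k` separating it from `o`: take
the median of `J n (k + 1)`, `J (n + 1) k` and a vertex lying across both the `n`-th wall of
`β` and the `k`-th wall of `γ` (such a vertex exists because these walls cross). The median lies
on the majority side of every wall, so it is separated from `o` exactly by `A (n + 1) ∪ B (k + 1)`.
Since no wall crosses itself, the `A n` are disjoint from the `B k`, so along the staircase
`J 0 0, J 1 0, J 1 1, J 2 1, …` the separating sets grow by one wall per step; since the
distance is the number of separating walls, this staircase is a geodesic ray.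
-/

theorem Set.symmDiff_union_union_subset {α : Type*} (a b c d : Set α) :
    symmDiff (a ∪ b) (c ∪ d) ⊆ symmDiff a c ∪ symmDiff b d := fun x hx => by
  simp only [Set.mem_symmDiff, Set.mem_union] at hx ⊢
  tauto

section Walls

variable {V W : Type*}

theorem sepSet_comm (side : W → V → Bool) (u v : V) : sepSet side u v = sepSet side v u := by
  ext w
  exact ne_comm

theorem sepSet_self (side : W → V → Bool) (u : V) : sepSet side u u = ∅ := by
  ext w
  simp [sepSet]

theorem symmDiff_sepSet (side : W → V → Bool) (o u v : V) :
    symmDiff (sepSet side o u) (sepSet side o v) = sepSet side u v := by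
  ext w
  simp only [sepSet, Set.mem_symmDiff, Set.mem_ofPred_eq]
  cases side w o <;> cases side w u <;> cases side w v <;> simp

theorem sepSet_subset_union (side : W → V → Bool) (u v x : V) :
    sepSet side u x ⊆ sepSet side u v ∪ sepSet side v x := by
  rw [← symmDiff_sepSet side v u x, sepSet_comm side v u]
  exact Set.symmDiff_subset_union

theorem raysWalls_eq_iUnion (side : W → V → Bool) (f : ℕ → V) :
    raysWalls side f = ⋃ n, sepSet side (f 0) (f n) := by
  ext w
  simp only [Set.mem_iUnion]
  constructor
  · rintro ⟨t, ht⟩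
    replace ht : w ∈ symmDiff (sepSet side (f 0) (f t)) (sepSet side (f 0) (f (t + 1))) := by
      rwa [symmDiff_sepSet]
    rcases Set.symmDiff_subset_union ht with h | h
    exacts [⟨t, h⟩, ⟨t + 1, h⟩]
  · rintro ⟨n, hn⟩
    induction n with
    | zero => simp [sepSet_self] at hn
    | succ n ih =>
      rcases sepSet_subset_union side (f 0) (f n) (f (n + 1)) hn with h | h
      exacts [ih h, ⟨n, h⟩]

theorem not_wallsCross_self (side : W → V → Bool) (w : W) : ¬WallsCross side w w := fun h => by
  obtain ⟨v, htrue, hfalse⟩ := h true false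
  exact absurd (htrue.symm.trans hfalse) (by decide)

theorem WallsCross.exists_subset_sepSet {side : W → V → Bool} {w₁ w₂ : W}
    (h : WallsCross side w₁ w₂) (o : V) : ∃ c, {w₁, w₂} ⊆ sepSet side o c := by
  obtain ⟨c, h₁, h₂⟩ := h (!side w₁ o) (!side w₂ o)
  exact ⟨c, by simp [Set.insert_subset_iff, sepSet, h₁, h₂]⟩

end Walls

section WallMetric

variable {V W : Type*} {Γ : SimpleGraph V} {side : W → V → Bool}

theorem exists_sepSet_eq_singleton_of_adj
    (hdist : ∀ u v : V, Γ.dist u v = (sepSet side u v).ncard) {u v : V} (h : Γ.Adj u v) :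
    ∃ w, sepSet side u v = {w} :=
  Set.ncard_eq_one.mp (by rw [← hdist, SimpleGraph.dist_eq_one_iff_adj.mpr h])

theorem disjoint_sepSet_of_dist_add_dist (hfin : ∀ u v : V, (sepSet side u v).Finite)
    (hdist : ∀ u v : V, Γ.dist u v = (sepSet side u v).ncard) {u v x : V}
    (h : Γ.dist u v + Γ.dist v x = Γ.dist u x) :
    Disjoint (sepSet side u v) (sepSet side v x) := by
  rw [← Set.ncard_union_eq_iff (hfin u v) (hfin v x)]
  refine le_antisymm (Set.ncard_union_le _ _) ?_
  calc (sepSet side u v).ncard + (sepSet side v x).ncard = (sepSet side u x).ncard := by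
        rw [← hdist, ← hdist, ← hdist, h]
    _ ≤ _ := Set.ncard_le_ncard (sepSet_subset_union side u v x) ((hfin u v).union (hfin v x))

theorem sepSet_subset_of_dist_add_dist (hfin : ∀ u v : V, (sepSet side u v).Finite)
    (hdist : ∀ u v : V, Γ.dist u v = (sepSet side u v).ncard) {u v x : V}
    (h : Γ.dist u v + Γ.dist v x = Γ.dist u x) :
    sepSet side u v ⊆ sepSet side u x := fun w huv => by
  have hvx : w ∉ sepSet side v x :=
    Set.disjoint_left.mp (disjoint_sepSet_of_dist_add_dist hfin hdist h) huv
  simp only [sepSet, Set.mem_ofPred_eq, not_not] at huv hvx ⊢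
  rwa [← hvx]

theorem sepSet_of_isMedianPt (hfin : ∀ u v : V, (sepSet side u v).Finite)
    (hdist : ∀ u v : V, Γ.dist u v = (sepSet side u v).ncard) {x y z m : V}
    (hm : IsMedianPt Γ x y z m) (o : V) :
    sepSet side o m = sepSet side o x ∩ sepSet side o y ∪ sepSet side o x ∩ sepSet side o z ∪
      sepSet side o y ∩ sepSet side o z := by
  have between : ∀ {a b : V}, Γ.dist a m + Γ.dist m b = Γ.dist a b →
      ∀ w, side w m = side w a ∨ side w m = side w b := by
    intro a b h w
    by_contra! hne
    exact Set.disjoint_left.mp (disjoint_sepSet_of_dist_add_dist hfin hdist h)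
      (Ne.symm hne.1) hne.2
  obtain ⟨hxy, hxz, hyz⟩ := hm
  ext w
  have hxy := between hxy w
  have hxz := between hxz w
  have hyz := between hyz w
  simp only [sepSet, Set.mem_union, Set.mem_inter_iff, Set.mem_ofPred_eq]
  revert hxy hxz hyz
  cases side w o <;> cases side w x <;> cases side w y <;> cases side w z <;>
    cases side w m <;> decide

theorem exists_sepSet_eq_union (hmedian : IsMedianGraph Γ)
    (hfin : ∀ u v : V, (sepSet side u v).Finite)
    (hdist : ∀ u v : V, Γ.dist u v = (sepSet side u v).ncard) {o x y c : V}
    (hc : symmDiff (sepSet side o x) (sepSet side o y) ⊆ sepSet side o c) :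
    ∃ m, sepSet side o m = sepSet side o x ∪ sepSet side o y := by
  obtain ⟨m, hm, -⟩ := hmedian x y c
  refine ⟨m, ?_⟩
  rw [sepSet_of_isMedianPt hfin hdist hm o]
  ext w
  have hcw := @hc w
  simp only [Set.mem_union, Set.mem_inter_iff, Set.mem_symmDiff] at hcw ⊢
  tauto

theorem IsGeodesicRay.ncard_sepSet
    (hdist : ∀ u v : V, Γ.dist u v = (sepSet side u v).ncard) {γ : ℕ → V}
    (hγ : IsGeodesicRay Γ γ) (n : ℕ) : (sepSet side (γ 0) (γ n)).ncard = n := by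
  rw [← hdist, hγ.2 0 n n.zero_le, Nat.sub_zero]

theorem IsGeodesicRay.monotone_sepSet (hfin : ∀ u v : V, (sepSet side u v).Finite)
    (hdist : ∀ u v : V, Γ.dist u v = (sepSet side u v).ncard) {γ : ℕ → V}
    (hγ : IsGeodesicRay Γ γ) : Monotone fun n => sepSet side (γ 0) (γ n) := by
  intro n k hnk
  apply sepSet_subset_of_dist_add_dist hfin hdist
  rw [hγ.2 0 n n.zero_le, hγ.2 n k hnk, hγ.2 0 k k.zero_le]
  omega

theorem isGeodesicRay_of_monotone_sepSet (hfin : ∀ u v : V, (sepSet side u v).Finite)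
    (hdist : ∀ u v : V, Γ.dist u v = (sepSet side u v).ncard) {σ : ℕ → V} {o : V}
    (hmono : Monotone fun t => sepSet side o (σ t))
    (hcard : ∀ t, (sepSet side o (σ t)).ncard = t) : IsGeodesicRay Γ σ := by
  have hdistσ : ∀ s t, s ≤ t → Γ.dist (σ s) (σ t) = t - s := by
    intro s t hst
    rw [hdist, ← symmDiff_sepSet side o, symmDiff_of_le (hmono hst),
      Set.ncard_sdiff (hmono hst) (hfin o (σ s)), hcard, hcard]
  refine ⟨fun t => SimpleGraph.dist_eq_one_iff_adj.mp ?_, hdistσ⟩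
  rw [hdistσ t (t + 1) t.le_succ]
  omega

theorem exists_sepSet_eq_union_of_wallsCross (hmedian : IsMedianGraph Γ)
    (hfin : ∀ u v : V, (sepSet side u v).Finite)
    (hdist : ∀ u v : V, Γ.dist u v = (sepSet side u v).ncard) {β γ : ℕ → V}
    (hβ : IsGeodesicRay Γ β) (hγ : IsGeodesicRay Γ γ) (h0 : β 0 = γ 0)
    (hcross : ∀ w₁ ∈ raysWalls side β, ∀ w₂ ∈ raysWalls side γ, WallsCross side w₁ w₂)
    (n k : ℕ) :
    ∃ v, sepSet side (β 0) v = sepSet side (β 0) (β n) ∪ sepSet side (γ 0) (γ k) := by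
  induction k generalizing n with
  | zero => exact ⟨β n, by rw [sepSet_self, Set.union_empty]⟩
  | succ k ihk =>
    induction n with
    | zero => exact ⟨γ (k + 1), by rw [sepSet_self, Set.empty_union, h0]⟩
    | succ n ihn =>
      obtain ⟨v₁, hv₁⟩ := ihn
      obtain ⟨v₂, hv₂⟩ := ihk (n + 1)
      obtain ⟨w₁, hw₁⟩ := exists_sepSet_eq_singleton_of_adj hdist (hβ.1 n)
      obtain ⟨w₂, hw₂⟩ := exists_sepSet_eq_singleton_of_adj hdist (hγ.1 k)
      have hw₁β : w₁ ∈ raysWalls side β := ⟨n, show w₁ ∈ sepSet side _ _ by rw [hw₁]; rfl⟩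
      have hw₂γ : w₂ ∈ raysWalls side γ := ⟨k, show w₂ ∈ sepSet side _ _ by rw [hw₂]; rfl⟩
      obtain ⟨c, hc⟩ := (hcross w₁ hw₁β w₂ hw₂γ).exists_subset_sepSet (β 0)
      have hcover : symmDiff (sepSet side (β 0) v₁) (sepSet side (β 0) v₂) ⊆
          sepSet side (β 0) c := by
        rw [hv₁, hv₂]
        refine (Set.symmDiff_union_union_subset _ _ _ _).trans ?_
        rw [symmDiff_sepSet, symmDiff_sepSet, sepSet_comm side (γ (k + 1)), hw₁, hw₂]
        exact hc
      obtain ⟨m, hm⟩ := exists_sepSet_eq_union hmedian hfin hdist hcover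
      refine ⟨m, ?_⟩
      rw [hm, hv₁, hv₂, Set.union_union_union_comm,
        Set.union_eq_right.mpr (hβ.monotone_sepSet hfin hdist n.le_succ),
        Set.union_eq_left.mpr (hγ.monotone_sepSet hfin hdist k.le_succ)]

theorem exists_isGeodesicRay_raysWalls_eq_union (hconn : Γ.Connected)
    (hfin : ∀ u v : V, (sepSet side u v).Finite)
    (hdist : ∀ u v : V, Γ.dist u v = (sepSet side u v).ncard) {o : V} {A B : ℕ → Set W}
    (hA : Monotone A) (hB : Monotone B) (hAcard : ∀ n, (A n).ncard = n)
    (hBcard : ∀ k, (B k).ncard = k) (hAB : ∀ n k, Disjoint (A n) (B k))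
    (hJ : ∀ n k, ∃ v, sepSet side o v = A n ∪ B k) :
    ∃ σ : ℕ → V, IsGeodesicRay Γ σ ∧ σ 0 = o ∧ raysWalls side σ = (⋃ n, A n) ∪ ⋃ k, B k := by
  choose J hJ using hJ
  set σ : ℕ → V := fun t => J ((t + 1) / 2) (t / 2)
  have hσ : ∀ t, sepSet side o (σ t) = A ((t + 1) / 2) ∪ B (t / 2) := fun t => hJ _ _
  have hcard : ∀ t, (sepSet side o (σ t)).ncard = t := by
    intro t
    have hfinσ := hσ t ▸ hfin o (σ t)
    rw [hσ, Set.ncard_union_eq (hAB _ _) (hfinσ.subset Set.subset_union_left)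
      (hfinσ.subset Set.subset_union_right), hAcard, hBcard]
    omega
  have hmono : Monotone fun t => sepSet side o (σ t) := by
    intro s t hst
    simp only [hσ]
    exact Set.union_subset_union (hA (by omega)) (hB (by omega))
  have hσ0 : σ 0 = o := (hconn.dist_eq_zero_iff.mp (by rw [hdist, hcard])).symm
  refine ⟨σ, isGeodesicRay_of_monotone_sepSet hfin hdist hmono hcard, hσ0, ?_⟩
  rw [raysWalls_eq_iUnion, hσ0]
  simp only [hσ, Set.iUnion_union_distrib]
  have hsurj₁ : Function.Surjective fun t => (t + 1) / 2 := fun n => ⟨2 * n, by dsimp only; omega⟩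
  have hsurj₂ : Function.Surjective fun t => t / 2 := fun k => ⟨2 * k, by dsimp only; omega⟩
  rw [hsurj₁.iUnion_comp A, hsurj₂.iUnion_comp B]

end WallMetric

theorem union_walls_ray_exists_general {V W : Type*} (Γ : SimpleGraph V)
    (hconn : Γ.Connected)
    (hmedian : IsMedianGraph Γ)
    (side : W → V → Bool)
    (hfin : ∀ u v : V, (sepSet side u v).Finite)
    (hdist : ∀ u v : V, Γ.dist u v = (sepSet side u v).ncard)
    (β γ : ℕ → V) (hβ : IsGeodesicRay Γ β) (hγ : IsGeodesicRay Γ γ)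
    (h0 : β 0 = γ 0)
    (hcross : ∀ w₁ ∈ raysWalls side β, ∀ w₂ ∈ raysWalls side γ,
      WallsCross side w₁ w₂) :
    ∃ σ : ℕ → V, IsGeodesicRay Γ σ ∧ σ 0 = β 0 ∧
      raysWalls side σ = raysWalls side β ∪ raysWalls side γ := by
  have hβW := raysWalls_eq_iUnion side β
  have hγW := raysWalls_eq_iUnion side γ
  have hdisj : Disjoint (raysWalls side β) (raysWalls side γ) :=
    Set.disjoint_left.mpr fun w hwβ hwγ => not_wallsCross_self side w (hcross w hwβ w hwγ)
  have hAB : ∀ n k, Disjoint (sepSet side (β 0) (β n)) (sepSet side (γ 0) (γ k)) := by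
    intro n k
    refine hdisj.mono ?_ ?_
    · rw [hβW]; exact Set.subset_iUnion (fun n => sepSet side (β 0) (β n)) n
    · rw [hγW]; exact Set.subset_iUnion (fun k => sepSet side (γ 0) (γ k)) k
  obtain ⟨σ, hσ, hσ0, hσW⟩ := exists_isGeodesicRay_raysWalls_eq_union hconn hfin hdist
    (hβ.monotone_sepSet hfin hdist) (hγ.monotone_sepSet hfin hdist) (hβ.ncard_sepSet hdist)
    (hγ.ncard_sepSet hdist) hAB
    (exists_sepSet_eq_union_of_wallsCross hmedian hfin hdist hβ hγ h0 hcross)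
  exact ⟨σ, hσ, hσ0, by rw [hσW, hβW, hγW]⟩

/-- in the (locally finite, median) 1-skeleton of a CAT(0) cube
complex, if `β, γ` are combinatorial geodesic rays with `β 0 = γ 0` such that
every hyperplane crossing `β` crosses every hyperplane crossing `γ`, then there
is a combinatorial geodesic ray `σ` with `σ 0 = β 0` whose set of crossed
hyperplanes is `W(β) ∪ W(γ)`. -/
theorem union_walls_ray_exists {V W : Type*} (Γ : SimpleGraph V)
    (hconn : Γ.Connected) (hlf : ∀ v : V, (Γ.neighborSet v).Finite)
    (hmedian : IsMedianGraph Γ)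
    (side : W → V → Bool)
    (hfin : ∀ u v : V, (sepSet side u v).Finite)
    (hdist : ∀ u v : V, Γ.dist u v = (sepSet side u v).ncard)
    (β γ : ℕ → V) (hβ : IsGeodesicRay Γ β) (hγ : IsGeodesicRay Γ γ)
    (h0 : β 0 = γ 0)
    (hcross : ∀ w₁ ∈ raysWalls side β, ∀ w₂ ∈ raysWalls side γ,
      WallsCross side w₁ w₂) :
    ∃ σ : ℕ → V, IsGeodesicRay Γ σ ∧ σ 0 = β 0 ∧
      raysWalls side σ = raysWalls side β ∪ raysWalls side γ :=
  union_walls_ray_exists_general Γ hconn hmedian side hfin hdist β γ hβ hγ h0 hcross
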